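/- The estimate of Theorem 2.1 is sharp for the Laplacian in terms of the asymptotics in h as h → 0. Concretely, fix a < b and for h > 0 let R_h = (0,h) × (a,b) and define u_h(x₁,x₂) = cosh( (π/(b−a))(x₁ − h/2) )·sin( π(x₂ − a)/(b−a) ). Then u_h is harmonic in R_h and vanishes on (0,h)×{a,b}, and there exist constants c > 0 and h₀ > 0, independent of h, such that for all 0 < h < h₀ one has ‖∇u_h‖²_{L²(R_h)} ≥ c( ‖u_h‖_{L²(R_h)}·‖∂_{x₁}u_h‖_{L²(R_h)}/h + ‖∂_{x₁}u_h‖²_{L²(R_h)} ), so the inequality ‖∇u‖² ≤ C( ‖u‖·‖u_{x₁}‖/h + ‖u_{x₁}‖² ) cannot hold with a constant tending to 0 as h → 0. -/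

import Mathlib

open MeasureTheory Set Real

/-- Partial derivative in the first (thin) direction of a function on `ℝ² = ℝ × ℝ`. -/
noncomputable def d₁ (f : ℝ × ℝ → ℝ) (p : ℝ × ℝ) : ℝ := fderiv ℝ f p (1, 0)

/-- Partial derivative in the second direction. -/
noncomputable def d₂ (f : ℝ × ℝ → ℝ) (p : ℝ × ℝ) : ℝ := fderiv ℝ f p (0, 1)

/-- The Laplacian of a function on `ℝ²`. -/
noncomputable def lap (f : ℝ × ℝ → ℝ) (p : ℝ × ℝ) : ℝ :=
  fderiv ℝ (fun q => d₁ f q) p (1, 0) + fderiv ℝ (fun q => d₂ f q) p (0, 1)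

/-- The Ansatz `u_h(x₁,x₂) = cosh((π/(b-a))(x₁ - h/2)) · sin(π(x₂-a)/(b-a))`. -/
noncomputable def ansatz (a b h : ℝ) (p : ℝ × ℝ) : ℝ :=
  Real.cosh (Real.pi / (b - a) * (p.1 - h / 2)) * Real.sin (Real.pi * (p.2 - a) / (b - a))

/-!
Writing `k = π / (b - a)`, the ansatz is the separated product
`cosh (k (x₁ - h/2)) · sin (k (x₂ - a))`, whose factors have second derivatives `k² cosh` and
`-k² sin`, so it is harmonic. Over the half period `(a, b)` the squares of `sin (k (x₂ - a))` and
`cos (k (x₂ - a))` have the same integral, so `‖∂₂u‖² = k² ‖u‖²`. In the thin direction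
`|sinh t| ≤ |t| cosh t` with `|t| ≤ k h` gives `|∂₁u| ≤ k² h |u|` pointwise, hence
`‖u‖ ‖∂₁u‖ / h ≤ k² ‖u‖² = ‖∂₂u‖²`, and the reverse estimate holds with `c = 1` for every `h > 0`.
-/

lemma d₁_mul_sep {f g f' : ℝ → ℝ} (hf : ∀ x, HasDerivAt f (f' x) x) (hg : Differentiable ℝ g) :
    d₁ (fun q => f q.1 * g q.2) = fun q => f' q.1 * g q.2 := by
  funext p
  have hfg : HasFDerivAt (fun q : ℝ × ℝ => f q.1 * g q.2) _ p :=
    ((hf p.1).hasFDerivAt.comp p hasFDerivAt_fst).mul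
      ((hg p.2).hasFDerivAt.comp p hasFDerivAt_snd)
  simp [d₁, hfg.fderiv, mul_comm]

lemma d₂_mul_sep {f g g' : ℝ → ℝ} (hf : Differentiable ℝ f) (hg : ∀ y, HasDerivAt g (g' y) y) :
    d₂ (fun q => f q.1 * g q.2) = fun q => f q.1 * g' q.2 := by
  funext p
  have hfg : HasFDerivAt (fun q : ℝ × ℝ => f q.1 * g q.2) _ p :=
    ((hf p.1).hasFDerivAt.comp p hasFDerivAt_fst).mul
      ((hg p.2).hasFDerivAt.comp p hasFDerivAt_snd)
  simp [d₂, hfg.fderiv]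

lemma lap_mul_sep {f f' f'' g g' g'' : ℝ → ℝ} (hf : ∀ x, HasDerivAt f (f' x) x)
    (hf' : ∀ x, HasDerivAt f' (f'' x) x) (hg : ∀ y, HasDerivAt g (g' y) y)
    (hg' : ∀ y, HasDerivAt g' (g'' y) y) :
    lap (fun q => f q.1 * g q.2) = fun q => f'' q.1 * g q.2 + f q.1 * g'' q.2 := by
  have hfd : Differentiable ℝ f := fun x => (hf x).differentiableAt
  have hgd : Differentiable ℝ g := fun y => (hg y).differentiableAt
  funext p
  change d₁ (d₁ _) p + d₂ (d₂ _) p = _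
  rw [d₁_mul_sep hf hgd, d₂_mul_sep hfd hg, d₁_mul_sep hf' hgd, d₂_mul_sep hfd hg']

lemma abs_sinh_le_abs_mul_cosh (t : ℝ) : |sinh t| ≤ |t| * cosh t := by
  have hbound : ∀ x ∈ uIoc 0 t, ‖cosh x‖ ≤ cosh t := by
    intro x hx
    rw [Real.norm_eq_abs, abs_of_pos (cosh_pos x), cosh_le_cosh, abs_le]
    rcases le_total 0 t with ht | ht
    · rw [uIoc_of_le ht] at hx
      exact ⟨by linarith [abs_nonneg t, hx.1], hx.2.trans (le_abs_self t)⟩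
    · rw [uIoc_of_ge ht] at hx
      exact ⟨by linarith [neg_abs_le t, hx.1], by linarith [abs_nonneg t, hx.2]⟩
  have hint : ∫ x in (0)..t, cosh x = sinh t := by
    simp [intervalIntegral.integral_eq_sub_of_hasDerivAt (fun x _ => hasDerivAt_sinh x)
      (continuous_cosh.intervalIntegrable _ _)]
  simpa [hint, mul_comm] using intervalIntegral.norm_integral_le_of_norm_le_const hbound

lemma Continuous.integrableOn_Ioo_prod_Ioo {f : ℝ × ℝ → ℝ} (hf : Continuous f) (a b c d : ℝ) :
    IntegrableOn f (Ioo a b ×ˢ Ioo c d) :=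
  (hf.continuousOn.integrableOn_compact (isCompact_Icc.prod isCompact_Icc)).mono_set
    (prod_mono Ioo_subset_Icc_self Ioo_subset_Icc_self)

lemma integral_cos_sq_sub_sin_sq_mul_sub {k : ℝ} (hk : k ≠ 0) (e b : ℝ) :
    ∫ y in e..b, cos (k * (y - e)) ^ 2 - sin (k * (y - e)) ^ 2 =
      sin (k * (b - e)) * cos (k * (b - e)) / k := by
  simp_rw [mul_sub]
  rw [intervalIntegral.integral_comp_mul_sub (fun x => cos x ^ 2 - sin x ^ 2) hk,
    integral_cos_sq_sub_sin_sq]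
  simp [div_eq_inv_mul]

lemma setIntegral_cos_sq_mul_sub_eq {k e b : ℝ} (hk : k ≠ 0) (heb : e ≤ b)
    (hkb : sin (k * (b - e)) = 0) :
    ∫ y in Ioo e b, cos (k * (y - e)) ^ 2 = ∫ y in Ioo e b, sin (k * (y - e)) ^ 2 := by
  have hdiff := integral_cos_sq_sub_sin_sq_mul_sub hk e b
  rw [hkb, zero_mul, zero_div, intervalIntegral.integral_of_le heb, integral_Ioc_eq_integral_Ioo,
    integral_sub ((Continuous.integrableOn_Icc (by fun_prop)).mono_set Ioo_subset_Icc_self)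
      ((Continuous.integrableOn_Icc (by fun_prop)).mono_set Ioo_subset_Icc_self)] at hdiff
  exact sub_eq_zero.1 hdiff

lemma sqrt_mul_sqrt_div_add_le {U D₁ D₂ κ h : ℝ} (hh : 0 < h) (hU : 0 ≤ U) (hκ : 0 ≤ κ)
    (hD₁ : D₁ ≤ (κ * h) ^ 2 * U) (hD₂ : D₂ = κ * U) :
    √U * √D₁ / h + D₁ ≤ D₁ + D₂ := by
  have hsqrt : √D₁ ≤ κ * h * √U := by
    calc √D₁ ≤ √((κ * h) ^ 2 * U) := sqrt_le_sqrt hD₁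
      _ = κ * h * √U := by rw [sqrt_mul (sq_nonneg _), sqrt_sq (by positivity)]
  have hprod : √U * √D₁ ≤ κ * U * h := by
    calc √U * √D₁ ≤ √U * (κ * h * √U) := mul_le_mul_of_nonneg_left hsqrt (sqrt_nonneg U)
      _ = κ * (√U * √U) * h := by ring
      _ = κ * U * h := by rw [mul_self_sqrt hU]
  rw [hD₂, add_comm D₁]
  gcongr
  exact (div_le_iff₀ hh).2 hprod

lemma hasDerivAt_mul_sub (k c x : ℝ) : HasDerivAt (fun x => k * (x - c)) k x := by
  simpa using ((hasDerivAt_id x).sub_const c).const_mul k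

noncomputable def coshMulSin (k c e : ℝ) (p : ℝ × ℝ) : ℝ :=
  cosh (k * (p.1 - c)) * sin (k * (p.2 - e))

section coshMulSin

variable (k c e : ℝ)

lemma d₁_coshMulSin :
    d₁ (coshMulSin k c e) = fun p => sinh (k * (p.1 - c)) * k * sin (k * (p.2 - e)) :=
  d₁_mul_sep (fun x => (hasDerivAt_mul_sub k c x).cosh)
    (fun y => (hasDerivAt_mul_sub k e y).sin.differentiableAt)

lemma d₂_coshMulSin :
    d₂ (coshMulSin k c e) = fun p => cosh (k * (p.1 - c)) * (cos (k * (p.2 - e)) * k) :=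
  d₂_mul_sep (fun x => (hasDerivAt_mul_sub k c x).cosh.differentiableAt)
    (fun y => (hasDerivAt_mul_sub k e y).sin)

lemma lap_coshMulSin : lap (coshMulSin k c e) = 0 := by
  change lap (fun q => cosh (k * (q.1 - c)) * sin (k * (q.2 - e))) = 0
  rw [lap_mul_sep (fun x => (hasDerivAt_mul_sub k c x).cosh)
    (fun x => (hasDerivAt_mul_sub k c x).sinh.mul_const k)
    (fun y => (hasDerivAt_mul_sub k e y).sin) (fun y => (hasDerivAt_mul_sub k e y).cos.mul_const k)]
  ext p
  simp only [Pi.zero_apply]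
  ring

lemma abs_d₁_coshMulSin_le {r : ℝ} {p : ℝ × ℝ} (hp : |p.1 - c| ≤ r) :
    |d₁ (coshMulSin k c e) p| ≤ k ^ 2 * r * |coshMulSin k c e p| := by
  set t := k * (p.1 - c)
  have hsinh : |sinh t| ≤ |k| * r * cosh t :=
    (abs_sinh_le_abs_mul_cosh t).trans <| mul_le_mul_of_nonneg_right
      (by rw [abs_mul]; exact mul_le_mul_of_nonneg_left hp (abs_nonneg k)) (cosh_pos t).le
  rw [d₁_coshMulSin, coshMulSin, abs_mul, abs_mul, abs_mul, abs_of_pos (cosh_pos t), ← sq_abs k]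
  calc |sinh t| * |k| * |sin (k * (p.2 - e))|
      ≤ |k| * r * cosh t * |k| * |sin (k * (p.2 - e))| := by gcongr
    _ = |k| ^ 2 * r * (cosh t * |sin (k * (p.2 - e))|) := by ring

lemma setIntegral_d₂_coshMulSin_sq (s : Set ℝ) {b : ℝ} (hk : k ≠ 0) (heb : e ≤ b)
    (hkb : sin (k * (b - e)) = 0) :
    ∫ p in s ×ˢ Ioo e b, d₂ (coshMulSin k c e) p ^ 2 =
      k ^ 2 * ∫ p in s ×ˢ Ioo e b, coshMulSin k c e p ^ 2 := by
  simp only [d₂_coshMulSin, coshMulSin, mul_pow]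
  rw [Measure.volume_eq_prod,
    setIntegral_prod_mul (μ := volume) (ν := volume) (fun x => cosh (k * (x - c)) ^ 2)
      (fun y => cos (k * (y - e)) ^ 2 * k ^ 2),
    setIntegral_prod_mul (μ := volume) (ν := volume) (fun x => cosh (k * (x - c)) ^ 2)
      (fun y => sin (k * (y - e)) ^ 2), integral_mul_const,
    setIntegral_cos_sq_mul_sub_eq hk heb hkb]
  ring

lemma setIntegral_d₁_coshMulSin_sq_le (h a b : ℝ) :
    ∫ p in Ioo 0 h ×ˢ Ioo a b, d₁ (coshMulSin k (h / 2) e) p ^ 2 ≤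
      (k ^ 2 * h) ^ 2 * ∫ p in Ioo 0 h ×ˢ Ioo a b, coshMulSin k (h / 2) e p ^ 2 := by
  rw [← integral_const_mul]
  refine setIntegral_mono_on ?_ ?_ (measurableSet_Ioo.prod measurableSet_Ioo) fun p hp => ?_
  · exact Continuous.integrableOn_Ioo_prod_Ioo (by rw [d₁_coshMulSin]; fun_prop) _ _ _ _
  · exact Continuous.integrableOn_Ioo_prod_Ioo (by unfold coshMulSin; fun_prop) _ _ _ _
  obtain ⟨hx₀, hxh⟩ := hp.1
  have hp₁ : |p.1 - h / 2| ≤ h := abs_le.2 ⟨by linarith, by linarith⟩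
  rw [← sq_abs, ← sq_abs (coshMulSin _ _ _ p), ← mul_pow]
  exact pow_le_pow_left₀ (abs_nonneg _) (abs_d₁_coshMulSin_le k (h / 2) e hp₁) 2

end coshMulSin

lemma ansatz_eq_coshMulSin (a b h : ℝ) : ansatz a b h = coshMulSin (π / (b - a)) (h / 2) a := by
  ext p
  simp only [ansatz, coshMulSin, mul_div_right_comm]

/-- **Theorem 2.3, first part**: sharpness of the gradient separation estimate (2.3) for the
Laplacian.  On `R_h = (0,h) × (a,b)` the Ansatz `u_h` is harmonic, vanishes on
`(0,h) × {a,b}`, and there are `c > 0`, `h₀ > 0` independent of `h` such that for all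
`0 < h < h₀` the reverse estimate
`‖∇u_h‖² ≥ c (‖u_h‖·‖∂_{x₁}u_h‖/h + ‖∂_{x₁}u_h‖²)` holds, so (2.3) is optimal as `h → 0`. -/
theorem gradient_separation_sharp (a b : ℝ) (hab : a < b) :
    (∀ h : ℝ, 0 < h → ∀ p ∈ Set.Ioo 0 h ×ˢ Set.Ioo a b, lap (ansatz a b h) p = 0) ∧
    (∀ h : ℝ, 0 < h → ∀ x ∈ Set.Ioo 0 h,
      ansatz a b h (x, a) = 0 ∧ ansatz a b h (x, b) = 0) ∧
    ∃ c : ℝ, 0 < c ∧ ∃ h₀ : ℝ, 0 < h₀ ∧ ∀ h : ℝ, 0 < h → h < h₀ →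
      c * (Real.sqrt (∫ p in Set.Ioo 0 h ×ˢ Set.Ioo a b, (ansatz a b h p) ^ 2) *
            Real.sqrt (∫ p in Set.Ioo 0 h ×ˢ Set.Ioo a b, (d₁ (ansatz a b h) p) ^ 2) / h +
          ∫ p in Set.Ioo 0 h ×ˢ Set.Ioo a b, (d₁ (ansatz a b h) p) ^ 2) ≤
        ∫ p in Set.Ioo 0 h ×ˢ Set.Ioo a b,
          ((d₁ (ansatz a b h) p) ^ 2 + (d₂ (ansatz a b h) p) ^ 2) := by
  have hba : b - a ≠ 0 := (sub_pos.2 hab).ne'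
  have hk : π / (b - a) ≠ 0 := div_ne_zero pi_ne_zero hba
  have hkb : sin (π / (b - a) * (b - a)) = 0 := by rw [div_mul_cancel₀ _ hba, sin_pi]
  refine ⟨fun h _ p _ => by rw [ansatz_eq_coshMulSin, lap_coshMulSin]; rfl,
    fun h _ x _ => ⟨by simp [ansatz], by simp [ansatz, mul_div_cancel_right₀ _ hba]⟩,
    1, one_pos, 1, one_pos, fun h hh _ => ?_⟩
  simp only [ansatz_eq_coshMulSin, one_mul]
  rw [integral_add
    (Continuous.integrableOn_Ioo_prod_Ioo (by rw [d₁_coshMulSin]; fun_prop) _ _ _ _)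
    (Continuous.integrableOn_Ioo_prod_Ioo (by rw [d₂_coshMulSin]; fun_prop) _ _ _ _)]
  exact sqrt_mul_sqrt_div_add_le hh
    (setIntegral_nonneg (measurableSet_Ioo.prod measurableSet_Ioo) fun p _ => sq_nonneg _)
    (sq_nonneg _) (setIntegral_d₁_coshMulSin_sq_le _ _ _ _ _)
    (setIntegral_d₂_coshMulSin_sq _ _ _ _ hk hab.le hkb)
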